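/- arXiv:2409.00806 — 3 statements merged into one kernel-verified Lean document; each statement's English description precedes it below -/
import Mathlib

section
/- Let G be a countably infinite group, H ≤ G a subgroup, and V ⊆ H a subset that is a set of operatorial recurrence in G. Then V is a set of operatorial recurrence in H. -/
/-- `V` is a set of operatorial recurrence in `G`: for every unitary representation `π`
of `G` on a Hilbert space and every vector `ξ` with `⟨π(v)ξ, ξ⟩ = 0` for all `v ∈ V`,
the vector `ξ` is orthogonal to all `π(G)`-invariant vectors. -/
def IsOpRecurrenceSet (G : Type) [Group G] (V : Set G) : Prop :=
  ∀ (H : Type) (_ : NormedAddCommGroup H) (_ : InnerProductSpace ℂ H) (_ : CompleteSpace H),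
    ∀ (π : G →* (H ≃ₗᵢ[ℂ] H)) (ξ : H),
      (∀ v ∈ V, (inner ℂ ((π v) ξ) ξ : ℂ) = 0) →
      ∀ η : H, (∀ g : G, (π g) η = η) → (inner ℂ ξ η : ℂ) = 0

/-!
Let `π` be a unitary representation of `H` on `K`, `ξ` a vector with `⟪π v ξ, ξ⟫ = 0` for
`v ∈ V`, and `η` an `H`-invariant vector. The projection `u` of `ξ` onto `ℂ η` is invariant and
`ξ - u ⊥ u`. Let `G` act on `ℓ²(G ⧸ H, K) ⊕ K` by the representation induced from `π` on the first
summand and trivially on the second; this space is `ℓ²(Option (G ⧸ H), K)`, where `G` fixes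
`none` and the cocycle is trivial there. For `v ∈ V ⊆ H` the vector `ζ = δ_H (ξ - u) + δ_none u`
has `⟪σ v ζ, ζ⟫ = ⟪π v (ξ - u), ξ - u⟫ + ‖u‖² = ⟪π v ξ, ξ⟫ = 0`, so recurrence in `G` makes `ζ`
orthogonal to the invariant vector `δ_none u`, that is `‖u‖² = 0`. Hence `ξ ⊥ η`.
-/

open scoped InnerProductSpace ENNReal

theorem Memℓp.comp_equiv {α β E : Type*} [NormedAddCommGroup E] {p : ℝ≥0∞} {f : α → E}
    (hf : Memℓp f p) (e : β ≃ α) : Memℓp (f ∘ e) p := by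
  obtain (rfl | rfl | hp) := p.trichotomy
  · exact memℓp_zero (hf.finite_dsupport.preimage e.injective.injOn)
  · exact memℓp_infty (by convert hf.bddAbove using 1; exact e.surjective.range_comp (‖f ·‖))
  · exact memℓp_gen (e.summable_iff.mpr (hf.summable hp))

section InducedRepresentation

variable {𝕜 G Λ ι X : Type*} [RCLike 𝕜] [Group G] [Group Λ] [MulAction G ι]
  [NormedAddCommGroup X] [InnerProductSpace 𝕜 X]

def IsMulCocycle (c : G → ι → Λ) : Prop :=
  ∀ g₁ g₂ i, c (g₁ * g₂) i = c g₁ (g₂ • i) * c g₂ i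

theorem IsMulCocycle.apply_one {c : G → ι → Λ} (hc : IsMulCocycle c) (i : ι) : c 1 i = 1 := by
  simpa using hc 1 1 i

variable (c : G → ι → Λ) (ρ : Λ →* (X ≃ₗᵢ[𝕜] X))

def inducedRepFun (g : G) (f : lp (fun _ : ι => X) 2) : lp (fun _ : ι => X) 2 :=
  ⟨fun i => ρ (c g (g⁻¹ • i)) (f (g⁻¹ • i)), Memℓp.of_norm <| by
    simp only [LinearIsometryEquiv.norm_map]
    exact (lp.memℓp f).norm.comp_equiv (MulAction.toPerm g⁻¹)⟩

theorem inducedRepFun_apply (g : G) (f : lp (fun _ : ι => X) 2) (i : ι) :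
    inducedRepFun c ρ g f i = ρ (c g (g⁻¹ • i)) (f (g⁻¹ • i)) := rfl

theorem norm_inducedRepFun (g : G) (f : lp (fun _ : ι => X) 2) :
    ‖inducedRepFun c ρ g f‖ = ‖f‖ := by
  have hp : 0 < (2 : ℝ≥0∞).toReal := by norm_num
  simp only [lp.norm_eq_tsum_rpow hp, inducedRepFun_apply, LinearIsometryEquiv.norm_map]
  congr 1
  exact (MulAction.toPerm g⁻¹).tsum_eq (fun i => ‖f i‖ ^ (2 : ℝ≥0∞).toReal)

variable {c} in
theorem inducedRepFun_mul (hc : IsMulCocycle c) (g₁ g₂ : G) (f : lp (fun _ : ι => X) 2) :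
    inducedRepFun c ρ (g₁ * g₂) f = inducedRepFun c ρ g₁ (inducedRepFun c ρ g₂ f) := by
  ext i
  simp only [inducedRepFun_apply, hc g₁ g₂, map_mul, mul_inv_rev, mul_smul, smul_inv_smul]
  rfl

variable {c} in
theorem inducedRepFun_one (hc : IsMulCocycle c) (f : lp (fun _ : ι => X) 2) :
    inducedRepFun c ρ 1 f = f := by
  ext i
  simp [inducedRepFun_apply, hc.apply_one]

variable {c}

def inducedRep (hc : IsMulCocycle c) :
    G →* (lp (fun _ : ι => X) 2 ≃ₗᵢ[𝕜] lp (fun _ : ι => X) 2) where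
  toFun g :=
    { toFun := inducedRepFun c ρ g
      map_add' f₁ f₂ := by ext i; simp [inducedRepFun_apply]
      map_smul' a f := by ext i; simp [inducedRepFun_apply]
      invFun := inducedRepFun c ρ g⁻¹
      left_inv f := by rw [← inducedRepFun_mul ρ hc, inv_mul_cancel, inducedRepFun_one ρ hc]
      right_inv f := by rw [← inducedRepFun_mul ρ hc, mul_inv_cancel, inducedRepFun_one ρ hc]
      norm_map' := norm_inducedRepFun c ρ g }
  map_one' := LinearIsometryEquiv.ext (inducedRepFun_one ρ hc)
  map_mul' g₁ g₂ := LinearIsometryEquiv.ext (inducedRepFun_mul ρ hc g₁ g₂)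

theorem inducedRep_apply (hc : IsMulCocycle c) (g : G) (f : lp (fun _ : ι => X) 2) (i : ι) :
    inducedRep ρ hc g f i = ρ (c g (g⁻¹ • i)) (f (g⁻¹ • i)) := rfl

theorem inducedRep_single [DecidableEq ι] (hc : IsMulCocycle c) (g : G) (i : ι) (x : X) :
    inducedRep ρ hc g (lp.single 2 i x) = lp.single 2 (g • i) (ρ (c g i) x) := by
  ext j
  rw [inducedRep_apply]
  obtain rfl | hj := eq_or_ne j (g • i)
  · simp
  · have hj' : g⁻¹ • j ≠ i := fun h => hj (by rw [← h, smul_inv_smul])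
    rw [lp.single_apply_ne 2 _ _ hj, lp.single_apply_ne 2 _ _ hj', map_zero]

end InducedRepresentation

namespace Subgroup

variable {G : Type*} [Group G] (H : Subgroup G)

open Classical in
noncomputable def cosetRep (q : G ⧸ H) : G :=
  if q = ((1 : G) : G ⧸ H) then 1 else q.out

theorem mk_cosetRep (q : G ⧸ H) : (H.cosetRep q : G ⧸ H) = q := by
  unfold cosetRep
  split_ifs with h
  · exact h.symm
  · exact q.out_eq'

theorem cosetRep_mk_one : H.cosetRep ((1 : G) : G ⧸ H) = 1 := if_pos rfl

theorem cosetRep_inv_mul_mem (g : G) (q : G ⧸ H) :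
    (H.cosetRep (g • q))⁻¹ * (g * H.cosetRep q) ∈ H := by
  rw [← QuotientGroup.eq, ← smul_eq_mul, ← MulAction.Quotient.smul_mk, mk_cosetRep, mk_cosetRep]

noncomputable def optionCocycle : G → Option (G ⧸ H) → H
  | _, none => 1
  | g, some q => ⟨(H.cosetRep (g • q))⁻¹ * (g * H.cosetRep q), H.cosetRep_inv_mul_mem g q⟩

theorem isMulCocycle_optionCocycle : IsMulCocycle H.optionCocycle := by
  rintro g₁ g₂ (_ | q)
  · simp [optionCocycle]
  · ext
    simp only [optionCocycle, Option.smul_some, coe_mul, mul_smul]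
    group

theorem optionCocycle_none (g : G) : H.optionCocycle g none = 1 := rfl

theorem smul_mk_one_of_mem {h : G} (hh : h ∈ H) :
    h • ((1 : G) : G ⧸ H) = ((1 : G) : G ⧸ H) := by
  rw [MulAction.Quotient.smul_mk, smul_eq_mul, mul_one, QuotientGroup.eq]
  simpa using hh

theorem optionCocycle_some_mk_one {h : G} (hh : h ∈ H) :
    H.optionCocycle h (some ((1 : G) : G ⧸ H)) = ⟨h, hh⟩ := by
  ext
  simp [optionCocycle, H.smul_mk_one_of_mem hh, cosetRep_mk_one]

end Subgroup

section InnerProduct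

variable {𝕜 ι X : Type*} [RCLike 𝕜] [NormedAddCommGroup X] [InnerProductSpace 𝕜 X]

theorem LinearIsometryEquiv.inner_map_add_of_map_eq (T : X ≃ₗᵢ[𝕜] X) {w u : X} (hu : T u = u)
    (hwu : ⟪w, u⟫_𝕜 = 0) : ⟪T (w + u), w + u⟫_𝕜 = ⟪T w, w⟫_𝕜 + ⟪u, u⟫_𝕜 := by
  have hTwu : ⟪T w, u⟫_𝕜 = 0 := by rw [← hu, T.inner_map_map, hwu]
  have huw : ⟪u, w⟫_𝕜 = 0 := inner_eq_zero_symm.mp hwu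
  rw [map_add, hu, inner_add_left, inner_add_right, inner_add_right, hTwu, huw]
  ring

theorem lp.inner_single_add_single [DecidableEq ι] {i j : ι} (hij : i ≠ j) (a b a' b' : X) :
    ⟪(lp.single 2 i a + lp.single 2 j b : lp (fun _ : ι => X) 2),
      lp.single 2 i a' + lp.single 2 j b'⟫_𝕜
      = ⟪a, a'⟫_𝕜 + ⟪b, b'⟫_𝕜 := by
  simp [inner_add_left, lp.inner_single_left, Pi.single_eq_of_ne hij, Pi.single_eq_of_ne hij.symm]

end InnerProduct

theorem IsOpRecurrenceSet.subgroup_fixed_eq_zero {G : Type} [Group G] {V : Set G}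
    (hV : IsOpRecurrenceSet G V) {H : Subgroup G} (hVH : V ⊆ H) {K : Type}
    [NormedAddCommGroup K] [InnerProductSpace ℂ K] [CompleteSpace K]
    (π : H →* (K ≃ₗᵢ[ℂ] K)) {ξ u : K} (hξ : ∀ v : H, (v : G) ∈ V → ⟪π v ξ, ξ⟫_ℂ = 0)
    (hu : ∀ h, π h u = u) (hξu : ⟪ξ - u, u⟫_ℂ = 0) : u = 0 := by
  classical
  let σ := inducedRep π H.isMulCocycle_optionCocycle
  let o : Option (G ⧸ H) := some ((1 : G) : G ⧸ H)
  let ζ : lp (fun _ : Option (G ⧸ H) => K) 2 := lp.single 2 o (ξ - u) + lp.single 2 none u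
  have hfix (g : G) : σ g (lp.single 2 none u) = lp.single 2 (none : Option (G ⧸ H)) u := by
    simp [σ, inducedRep_single, Subgroup.optionCocycle_none]
  have hrec (v : G) (hv : v ∈ V) : ⟪σ v ζ, ζ⟫_ℂ = 0 := by
    have hvH : v ∈ H := hVH hv
    have hσζ : σ v ζ = lp.single 2 o (π ⟨v, hvH⟩ (ξ - u)) + lp.single 2 none u := by
      rw [map_add, hfix, inducedRep_single, Option.smul_some, H.smul_mk_one_of_mem hvH,
        H.optionCocycle_some_mk_one hvH]
    rw [hσζ, lp.inner_single_add_single (Option.some_ne_none _),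
      ← (π ⟨v, hvH⟩).inner_map_add_of_map_eq (hu _) hξu, sub_add_cancel]
    exact hξ _ hv
  have h := hV _ inferInstance inferInstance inferInstance σ ζ hrec _ hfix
  simpa [ζ, o, lp.inner_single_right] using h

theorem opRecurrence_of_subgroup_general (G : Type) [Group G]
    (H : Subgroup G) (V : Set G) (hVH : V ⊆ (H : Set G))
    (hV : IsOpRecurrenceSet G V) :
    IsOpRecurrenceSet H {h : H | (h : G) ∈ V} := by
  intro K _ _ _ π ξ hξ η hη
  set u := (ℂ ∙ η).starProjection ξ
  have hu (h : H) : π h u = u := by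
    obtain ⟨a, ha⟩ := Submodule.mem_span_singleton.mp ((ℂ ∙ η).starProjection_apply_mem ξ)
    rw [show u = a • η from ha.symm, map_smul, hη]
  have hu0 : u = 0 := hV.subgroup_fixed_eq_zero hVH π hξ hu
    (Submodule.starProjection_inner_eq_zero ξ u ((ℂ ∙ η).starProjection_apply_mem ξ))
  exact Submodule.mem_orthogonal_singleton_iff_inner_left.mp
    (((ℂ ∙ η).starProjection_apply_eq_zero_iff).mp hu0)

/-- If `V ⊆ H ≤ G` is a set of operatorial recurrence in `G`, then it is one in `H`. -/
theorem opRecurrence_of_subgroup (G : Type) [Group G] [Countable G] [Infinite G]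
    (H : Subgroup G) (V : Set G) (hVH : V ⊆ (H : Set G))
    (hV : IsOpRecurrenceSet G V) :
    IsOpRecurrenceSet H {h : H | (h : G) ∈ V} :=
  opRecurrence_of_subgroup_general G H V hVH hV
end

section
/- Let G be a countably infinite group and A ⊆ G an infinite subset. Then V = {a b^{-1} : a, b ∈ A, a ≠ b} is a set of operatorial recurrence in G. -/
open scoped InnerProductSpace

theorem Orthonormal.eq_zero_of_forall_inner_eq {𝕜 E ι : Type*} [RCLike 𝕜]
    [NormedAddCommGroup E] [InnerProductSpace 𝕜 E] [Infinite ι] {v : ι → E}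
    (hv : Orthonormal 𝕜 v) {x : E} {c : 𝕜} (h : ∀ i, ⟪v i, x⟫_𝕜 = c) : c = 0 := by
  have hsum := hv.inner_products_summable x
  simp only [h, summable_const_iff] at hsum
  simpa using hsum

theorem orthonormal_inv_smul_of_norm_eq {𝕜 E ι : Type*} [RCLike 𝕜]
    [NormedAddCommGroup E] [InnerProductSpace 𝕜 E] {v : ι → E} {r : ℝ} (hr : r ≠ 0)
    (hnorm : ∀ i, ‖v i‖ = r) (horth : Pairwise fun i j => ⟪v i, v j⟫_𝕜 = 0) :
    Orthonormal 𝕜 fun i => ((r⁻¹ : ℝ) : 𝕜) • v i := by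
  refine ⟨fun i => ?_, fun i j hij => ?_⟩
  · rw [norm_smul, hnorm, RCLike.norm_ofReal, abs_inv, ← hnorm i, abs_norm,
      inv_mul_cancel₀ (hnorm i ▸ hr)]
  · simp only [inner_smul_left, inner_smul_right, horth hij, mul_zero]

section UnitaryRepresentation

variable {G 𝕜 H : Type*} [Group G] [RCLike 𝕜] [NormedAddCommGroup H] [InnerProductSpace 𝕜 H]
  (π : G →* (H ≃ₗᵢ[𝕜] H))

theorem inner_map_inv_map_inv (a b : G) (ξ : H) :
    ⟪π a⁻¹ ξ, π b⁻¹ ξ⟫_𝕜 = ⟪π (b * a⁻¹) ξ, ξ⟫_𝕜 := by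
  rw [← (π b).inner_map_map]
  simp [map_mul]

theorem inner_map_of_forall_map_eq {η : H} (hη : ∀ g, π g η = η) (g : G) (ξ : H) :
    ⟪π g ξ, η⟫_𝕜 = ⟪ξ, η⟫_𝕜 := by
  rw [← (π g).inner_map_map ξ η, hη]

end UnitaryRepresentation

theorem opRecurrence_differenceSet_general (G : Type) [Group G]
    (A : Set G) (hA : A.Infinite) :
    IsOpRecurrenceSet G {g : G | ∃ a ∈ A, ∃ b ∈ A, a ≠ b ∧ g = a * b⁻¹} := by
  intro H _ _ _ π ξ hV η hη
  rcases eq_or_ne ξ 0 with rfl | hξ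
  · exact inner_zero_left η
  have horth : Pairwise fun a b : A => ⟪π (a : G)⁻¹ ξ, π (b : G)⁻¹ ξ⟫_ℂ = 0 := by
    intro a b hab
    rw [inner_map_inv_map_inv]
    exact hV _ ⟨b, b.2, a, a.2, fun h => hab (Subtype.ext h).symm, rfl⟩
  have hon := orthonormal_inv_smul_of_norm_eq (norm_ne_zero_iff.mpr hξ)
    (fun a : A => (π (a : G)⁻¹).norm_map ξ) horth
  have : Infinite A := hA.to_subtype
  have hc := hon.eq_zero_of_forall_inner_eq (x := η) fun a => by
    rw [inner_smul_left, inner_map_of_forall_map_eq π hη]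
  simpa [hξ] using hc

/-- For any infinite `A ⊆ G`, the difference set `{a b⁻¹ : a ≠ b ∈ A}` is a set of
operatorial recurrence. -/
theorem opRecurrence_differenceSet (G : Type) [Group G] [Countable G] [Infinite G]
    (A : Set G) (hA : A.Infinite) :
    IsOpRecurrenceSet G {g : G | ∃ a ∈ A, ∃ b ∈ A, a ≠ b ∧ g = a * b⁻¹} :=
  opRecurrence_differenceSet_general G A hA
end

section
/- Let G be a countably infinite group, H ≤ G a finite-index subgroup. Then G \ H is not a set of operatorial recurrence in G. -/
section PermutationRep

variable (𝕜 : Type*) [RCLike 𝕜] (G : Type*) [Group G] (α : Type*) [Fintype α] [MulAction G α]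

noncomputable def permutationRep : G →* (EuclideanSpace 𝕜 α ≃ₗᵢ[𝕜] EuclideanSpace 𝕜 α) where
  toFun g := LinearIsometryEquiv.piLpCongrLeft 2 𝕜 𝕜 (MulAction.toPerm g)
  map_one' := by
    ext v x
    simp [LinearIsometryEquiv.piLpCongrLeft_apply, Equiv.piCongrLeft'_apply]
  map_mul' a b := by
    ext v x
    simp [LinearIsometryEquiv.piLpCongrLeft_apply, Equiv.piCongrLeft'_apply, mul_smul]

variable {𝕜 G α}

theorem permutationRep_apply (g : G) (v : EuclideanSpace 𝕜 α) (x : α) :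
    permutationRep 𝕜 G α g v x = v (g⁻¹ • x) := by
  simp [permutationRep, LinearIsometryEquiv.piLpCongrLeft_apply, Equiv.piCongrLeft'_apply]

theorem permutationRep_single [DecidableEq α] (g : G) (a : α) (c : 𝕜) :
    permutationRep 𝕜 G α g (EuclideanSpace.single a c) = EuclideanSpace.single (g • a) c :=
  EuclideanSpace.piLpCongrLeft_single _ _ _

theorem permutationRep_const (g : G) (c : 𝕜) :
    permutationRep 𝕜 G α g (WithLp.toLp 2 fun _ => c) = WithLp.toLp 2 fun _ => c := by
  ext x
  rw [permutationRep_apply]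

end PermutationRep

theorem not_isOpRecurrenceSet_of_forall_smul_ne {G α : Type} [Group G] [Fintype α]
    [MulAction G α] {V : Set G} (a : α) (hV : ∀ v ∈ V, v • a ≠ a) :
    ¬ IsOpRecurrenceSet G V := by
  classical
  intro hrec
  let ξ : EuclideanSpace ℂ α := EuclideanSpace.single a 1
  have hξ : ∀ v ∈ V, inner ℂ (permutationRep ℂ G α v ξ) ξ = 0 := fun v hv => by
    rw [permutationRep_single, EuclideanSpace.inner_single_left, PiLp.single_apply,
      if_neg (hV v hv), mul_zero]
  have hξη := hrec _ inferInstance inferInstance inferInstance (permutationRep ℂ G α) ξ hξ _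
    (permutationRep_const · 1)
  rw [EuclideanSpace.inner_single_left] at hξη
  simp at hξη

theorem not_opRecurrence_compl_finiteIndex_general (G : Type) [Group G]
    (H : Subgroup G) [H.FiniteIndex] :
    ¬ IsOpRecurrenceSet G ((H : Set G)ᶜ) := by
  have : Fintype (G ⧸ H) := Fintype.ofFinite _
  refine not_isOpRecurrenceSet_of_forall_smul_ne ((1 : G) : G ⧸ H) fun v hv hfix => hv ?_
  rwa [← MulAction.mem_stabilizer_iff, MulAction.stabilizer_quotient] at hfix

/-- The complement of a finite index subgroup is not a set of operatorial recurrence. -/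
theorem not_opRecurrence_compl_finiteIndex (G : Type) [Group G] [Countable G] [Infinite G]
    (H : Subgroup G) [H.FiniteIndex] :
    ¬ IsOpRecurrenceSet G ((H : Set G)ᶜ) :=
  not_opRecurrence_compl_finiteIndex_general G H
end
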